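/- arXiv:cs/0107026 — 3 statements merged into one kernel-verified Lean document; each statement's English description precedes it below -/
import Mathlib

section
/- Let P be an annotated revision program, and let B_I, B_R, C be T²-valuations with B_R ≤ₖ B_I ⊕ C. Then C satisfies the bodies of all rules in the reduct P_{B_R}|B_I. -/
namespace ARP

variable (U T : Type*)

/-- Revision atoms: `(true, a)` is `in(a)`, `(false, a)` is `out(a)`. -/
abbrev RevAtom := Bool × U
/-- Annotated revision atoms `(l : α)`. -/
abbrev AnnAtom := (RevAtom U) × T
/-- An annotated revision rule: a head and a list of body atoms. -/
abbrev Rule := AnnAtom U T × List (AnnAtom U T)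
/-- An annotated revision program: a set of rules. -/
abbrev Program := Set (Rule U T)
/-- T-valuations of revision atoms. -/
abbrev TVal := RevAtom U → T
/-- T²-valuations of atoms, with the pointwise (knowledge) ordering. -/
abbrev Val := U → T × T

variable {U T} [CompleteDistribLattice T]

/-- A T-valuation satisfies `(l : α)` iff `v l ≥ α`. -/
def satA (v : TVal U T) (q : AnnAtom U T) : Prop := q.2 ≤ v q.1

/-- The bijection θ⁻¹ from T²-valuations to T-valuations. -/
def thetaInv (B : Val U T) : TVal U T := fun l => if l.1 then (B l.2).1 else (B l.2).2

/-- The van Emden-Kowalski style operator on T-valuations. -/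
def TP (P : Program U T) (v : TVal U T) : TVal U T :=
  fun l => sSup {α | ∃ r ∈ P, r.1 = (l, α) ∧ ∀ q ∈ r.2, satA v q}

/-- The operator `T_P^b = θ ∘ T_P ∘ θ⁻¹` on T²-valuations. -/
def TPb (P : Program U T) (B : Val U T) : Val U T :=
  fun a => (TP P (thetaInv B) (true, a), TP P (thetaInv B) (false, a))

/-- Conflation on T², relative to a De Morgan complement `c` on T. -/
def conf (c : T → T) (p : T × T) : T × T := (c p.2, c p.1)

/-- Conflation extended pointwise to T²-valuations. -/
def confV (c : T → T) (B : Val U T) : Val U T := fun a => conf c (B a)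

/-- `B` is a model of `P`: it satisfies every rule of `P`. -/
def isModel (P : Program U T) (B : Val U T) : Prop :=
  ∀ r ∈ P, (∀ q ∈ r.2, satA (thetaInv B) q) → satA (thetaInv B) r.1

/-- `B` is an s-model of `P`. -/
def isSModel (c : T → T) (P : Program U T) (B : Val U T) : Prop :=
  TPb P B ≤ B ∧ B ≤ TPb P B ⊔ confV c (TPb P B)

/-- The relative pseudocomplement: the least `γ` with `α ⊔ γ ≥ β`. -/
def pcomp (α β : T) : T := sInf {γ | β ≤ α ⊔ γ}

/-- The reduct `P_{B_R}|B_I`. -/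
def reduct (P : Program U T) (BR BI : Val U T) : Program U T :=
  { r' | ∃ r ∈ P, (∀ q ∈ r.2, satA (thetaInv BR) q) ∧
      r' = (r.1, r.2.map (fun q => (q.1, pcomp (thetaInv BI q.1) q.2))) }

/-- The necessary change: the least (pre)fixpoint of `T_P^b`. -/
def NC (P : Program U T) : Val U T := sInf {B | TPb P B ≤ B}

/-- A T²-valuation is consistent if `B ≤ₖ -B`. -/
def consistentVal (c : T → T) (B : Val U T) : Prop := B ≤ confV c B

/-- `B_R` is a `P`-justified revision of `B_I`. -/
def JRev (c : T → T) (P : Program U T) (BI BR : Val U T) : Prop :=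
  BR = (BI ⊓ confV c (NC (reduct P BR BI))) ⊔ NC (reduct P BR BI)

end ARP

namespace ARP

variable {U T : Type*} [CompleteDistribLattice T]

theorem pcomp_eq_sdiff (α β : T) : pcomp α β = β \ α :=
  le_antisymm (sInf_le le_sup_sdiff) (le_sInf fun _ => sdiff_le_iff.2)

theorem thetaInv_mono : Monotone (thetaInv : Val U T → TVal U T) := by
  intro B B' h l
  unfold thetaInv
  split_ifs
  exacts [(h l.2).1, (h l.2).2]

theorem thetaInv_sup (B B' : Val U T) : thetaInv (B ⊔ B') = thetaInv B ⊔ thetaInv B' := by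
  funext l
  simp only [thetaInv, Pi.sup_apply]
  split_ifs <;> rfl

end ARP

theorem reduct_bodies_satisfied {U T : Type*} [CompleteDistribLattice T]
    (P : ARP.Program U T) (BI BR C : ARP.Val U T)
    (h : BR ≤ BI ⊔ C) :
    ∀ r ∈ ARP.reduct P BR BI, ∀ q ∈ r.2, ARP.satA (ARP.thetaInv C) q := by
  rintro _ ⟨r, -, hbody, rfl⟩ _ hmem
  obtain ⟨q, hq, rfl⟩ := List.mem_map.1 hmem
  change ARP.pcomp _ _ ≤ _
  rw [ARP.pcomp_eq_sdiff, sdiff_le_iff]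
  calc q.2 ≤ ARP.thetaInv BR q.1 := hbody q hq
    _ ≤ ARP.thetaInv (BI ⊔ C) q.1 := ARP.thetaInv_mono h q.1
    _ = ARP.thetaInv BI q.1 ⊔ ARP.thetaInv C q.1 := by rw [ARP.thetaInv_sup]; rfl
end

section
/- Let B_I be a model of annotated revision program P. Then B_I is a P-justified revision of itself if and only if B_I is an s-model of P. -/
/-!
The reduct `P_B|B` keeps only the rules whose bodies `B` satisfies, and for those every rewritten
annotation `pcomp (B l) α` is `⊥`, so the reduct's operator `T^b` is constant with value `T_P^b(B)`, which is therefore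
its necessary change. Self-justification then reads `B = (B ⊓ -D) ⊔ D` with `D = T_P^b(B) ≤ B`,
and by distributivity this is `B ≤ D ⊔ -D`.
-/

theorem eq_inf_sup_iff_le_sup {α : Type*} [DistribLattice α] {b d x : α} (hd : d ≤ b) :
    b = (b ⊓ x) ⊔ d ↔ b ≤ d ⊔ x := by
  rw [sup_inf_right, sup_eq_left.2 hd, left_eq_inf, sup_comm]

namespace ARP

variable {U T : Type*} [CompleteDistribLattice T]

theorem pcomp_eq_bot_of_le {a b : T} (h : b ≤ a) : pcomp a b = ⊥ :=
  le_bot_iff.1 (sInf_le (show b ≤ a ⊔ ⊥ by rwa [sup_bot_eq]))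

theorem TP_reduct_self (P : Program U T) (B : Val U T) (w : TVal U T) :
    TP (reduct P B B) w = TP P (thetaInv B) := by
  funext l
  refine congrArg sSup (Set.ext fun α => ⟨?_, ?_⟩)
  · rintro ⟨-, ⟨r, hrP, hbody, rfl⟩, hhead, -⟩
    exact ⟨r, hrP, hhead, hbody⟩
  · rintro ⟨r, hrP, hhead, hbody⟩
    refine ⟨_, ⟨r, hrP, hbody, rfl⟩, hhead, ?_⟩
    simp only [List.mem_map]
    rintro _ ⟨q, hq, rfl⟩
    exact (pcomp_eq_bot_of_le (hbody q hq)).trans_le bot_le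

theorem TPb_reduct_self (P : Program U T) (B B' : Val U T) :
    TPb (reduct P B B) B' = TPb P B := by
  unfold TPb
  rw [TP_reduct_self]

theorem NC_eq_of_forall_TPb_eq {Q : Program U T} {D : Val U T} (h : ∀ B, TPb Q B = D) :
    NC Q = D := by
  simp only [NC, h]
  exact csInf_Ici

theorem NC_reduct_self (P : Program U T) (B : Val U T) : NC (reduct P B B) = TPb P B :=
  NC_eq_of_forall_TPb_eq (TPb_reduct_self P B)

theorem TPb_le_of_isModel {P : Program U T} {B : Val U T} (hmod : isModel P B) :
    TPb P B ≤ B := by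
  have hTP : ∀ l, TP P (thetaInv B) l ≤ thetaInv B l := fun l =>
    sSup_le fun _ ⟨r, hrP, hhead, hbody⟩ => by
      simpa only [satA, hhead] using hmod r hrP hbody
  exact fun a => ⟨hTP (true, a), hTP (false, a)⟩

end ARP

theorem self_jrev_iff_smodel_general {U T : Type*} [CompleteDistribLattice T]
    (c : T → T)
    (P : ARP.Program U T) (BI : ARP.Val U T)
    (hmod : ARP.isModel P BI) :
    ARP.JRev c P BI BI ↔ ARP.isSModel c P BI := by
  have hD := ARP.TPb_le_of_isModel hmod
  rw [ARP.JRev, ARP.NC_reduct_self, ARP.isSModel, eq_inf_sup_iff_le_sup hD]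
  exact (and_iff_right hD).symm

theorem self_jrev_iff_smodel {U T : Type*} [CompleteDistribLattice T]
    (c : T → T)
    (hinv : ∀ a, c (c a) = a)
    (hdm1 : ∀ a b : T, c (a ⊔ b) = c a ⊓ c b)
    (hdm2 : ∀ a b : T, c (a ⊓ b) = c a ⊔ c b)
    (P : ARP.Program U T) (BI : ARP.Val U T)
    (hmod : ARP.isModel P BI) :
    ARP.JRev c P BI BI ↔ ARP.isSModel c P BI :=
  self_jrev_iff_smodel_general c P BI hmod
end

section
/- Let B_I be a consistent model of annotated revision program P. Then B_I is the unique P-justified revision of itself: B_I is a P-justified revision of B_I, and every P-justified revision B_R of B_I equals B_I. -/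
/-!
If the body of a rule of the reduct `P_{B_R}|B_I` holds in `B_I`, so does the body of the rule of `P`
it comes from, since `β ≤ α ⊔ pcomp α β`. As `B_I` is a model, `B_I` is therefore a prefixpoint of
`T^b` for the reduct, and the necessary change `C` lies below `B_I`. Consistency and antitonicity of
conflation give `B_I ≤ -B_I ≤ -C`, so `(B_I ⊗ -C) ⊕ C = B_I` for every `B_R`.
-/

namespace ARP

variable {U T : Type*} [CompleteDistribLattice T]

theorem le_sup_pcomp (α β : T) : β ≤ α ⊔ pcomp α β := by
  rw [pcomp, sup_sInf_eq]
  exact le_iInf₂ fun _ hγ => hγ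

theorem TP_reduct_le_of_isModel {P : Program U T} {BR BI : Val U T} (hmod : isModel P BI) :
    TP (reduct P BR BI) (thetaInv BI) ≤ thetaInv BI := by
  intro l
  refine sSup_le ?_
  rintro α ⟨_, ⟨r, hrP, -, rfl⟩, hhead, hbody⟩
  have hsat : ∀ q ∈ r.2, satA (thetaInv BI) q := fun q hq =>
    (le_sup_pcomp _ _).trans (sup_le le_rfl (hbody _ (List.mem_map_of_mem hq)))
  have hhead_sat := hmod r hrP hsat
  rwa [satA, hhead] at hhead_sat

theorem TPb_le_of_TP_thetaInv_le {P : Program U T} {B : Val U T}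
    (h : TP P (thetaInv B) ≤ thetaInv B) : TPb P B ≤ B :=
  fun a => ⟨h (true, a), h (false, a)⟩

theorem NC_le_of_TPb_le {P : Program U T} {B : Val U T} (h : TPb P B ≤ B) : NC P ≤ B :=
  sInf_le h

theorem NC_reduct_le_of_isModel {P : Program U T} {BR BI : Val U T} (hmod : isModel P BI) :
    NC (reduct P BR BI) ≤ BI :=
  NC_le_of_TPb_le (TPb_le_of_TP_thetaInv_le (TP_reduct_le_of_isModel hmod))

theorem confV_antitone {c : T → T} (hc : Antitone c) : Antitone (confV c : Val U T → Val U T) :=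
  fun _ _ h a => ⟨hc (h a).2, hc (h a).1⟩

theorem revise_eq_self_of_consistent {c : T → T} (hc : Antitone c) {BI C : Val U T}
    (hcons : consistentVal c BI) (hC : C ≤ BI) : (BI ⊓ confV c C) ⊔ C = BI := by
  have hBI : BI ≤ confV c C := hcons.trans (confV_antitone hc hC)
  rw [inf_eq_left.mpr hBI, sup_eq_left.mpr hC]

end ARP

theorem consistent_model_unique_revision_general {U T : Type*} [CompleteDistribLattice T]
    (c : T → T)
    (hdm1 : ∀ a b : T, c (a ⊔ b) = c a ⊓ c b)
    (P : ARP.Program U T) (BI : ARP.Val U T)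
    (hcons : ARP.consistentVal c BI) (hmod : ARP.isModel P BI) :
    ARP.JRev c P BI BI ∧ ∀ BR : ARP.Val U T, ARP.JRev c P BI BR → BR = BI := by
  have hc : Antitone c := monotone_toDual_comp_iff.mp
    (Monotone.of_map_sup fun a b => congrArg OrderDual.toDual (hdm1 a b))
  have revise_eq_self (BR : ARP.Val U T) :
      (BI ⊓ ARP.confV c (ARP.NC (ARP.reduct P BR BI))) ⊔ ARP.NC (ARP.reduct P BR BI) = BI :=
    ARP.revise_eq_self_of_consistent hc hcons (ARP.NC_reduct_le_of_isModel hmod)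
  exact ⟨(revise_eq_self BI).symm, fun BR h => h.trans (revise_eq_self BR)⟩

theorem consistent_model_unique_revision {U T : Type*} [CompleteDistribLattice T]
    (c : T → T)
    (hinv : ∀ a, c (c a) = a)
    (hdm1 : ∀ a b : T, c (a ⊔ b) = c a ⊓ c b)
    (hdm2 : ∀ a b : T, c (a ⊓ b) = c a ⊔ c b)
    (P : ARP.Program U T) (BI : ARP.Val U T)
    (hcons : ARP.consistentVal c BI) (hmod : ARP.isModel P BI) :
    ARP.JRev c P BI BI ∧ ∀ BR : ARP.Val U T, ARP.JRev c P BI BR → BR = BI :=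
  consistent_model_unique_revision_general c hdm1 P BI hcons hmod
end
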